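/- arXiv:1601.06888 — 4 statements merged into one kernel-verified Lean document; each statement's English description precedes it below -/
import Mathlib

section
/- Define Γ(N) = max { tr(J_N R) : R Hermitian, ρ a density operator, −ρ ⊗ I ≤ R^{T_B} ≤ ρ ⊗ I } where J_N is the Choi matrix of channel N. Then for the noiseless qudit channel I_d (identity channel on C^d), Γ(I_d) = d. -/
open Matrix
open scoped Kronecker ComplexOrder

/-- Loewner order: `Loe M N` means `M ≤ N`. -/
def Loe {n : Type*} [Fintype n] (M N : Matrix n n ℂ) : Prop := (N - M).PosSemidef

/-- Partial transpose on the second tensor factor. -/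
def PTb {A B : Type*} (M : Matrix (A × B) (A × B) ℂ) : Matrix (A × B) (A × B) ℂ :=
  fun p q => M (p.1, q.2) (q.1, p.2)

/-- The set of values `tr(J R)` of the SDP `Γ`: `R` Hermitian, `ρ` a density
operator, `−ρ ⊗ I ≤ R^{T_B} ≤ ρ ⊗ I`. -/
def GammaSet {A B : Type*} [Fintype A] [Fintype B] [DecidableEq B]
    (J : Matrix (A × B) (A × B) ℂ) : Set ℝ :=
  {t : ℝ | ∃ (R : Matrix (A × B) (A × B) ℂ) (ρ : Matrix A A ℂ),
    R.IsHermitian ∧ ρ.PosSemidef ∧ ρ.trace = 1 ∧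
    Loe (-(ρ ⊗ₖ (1 : Matrix B B ℂ))) (PTb R) ∧
    Loe (PTb R) (ρ ⊗ₖ (1 : Matrix B B ℂ)) ∧
    (J * R).trace = (t : ℂ)}

/-- The unnormalized maximally entangled projector `Φ_d`, which is the Choi
matrix of the noiseless qudit channel `I_d`. -/
def Phi (d : ℕ) : Matrix (Fin d × Fin d) (Fin d × Fin d) ℂ :=
  fun p q => if p.1 = p.2 ∧ q.1 = q.2 then 1 else 0

/-!
Partial transposition turns `Φ_d` into the swap operator `F` and preserves `tr (A B)`, so
`tr (Φ_d R) = tr (F X)` with `X = R^{T_B}`. Write `F = 2P - 1` with `P = (1 + F)/2` the projection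
onto the symmetric subspace; for `σ = ρ ⊗ I` and `-σ ≤ X ≤ σ`,
`tr σ - tr (F X) = tr (P (σ - X)) + tr ((1 - P) (σ + X)) ≥ 0`, and `tr σ = d`.
Equality holds for `R = Φ_d / d`, `ρ = I / d`, since `R^{T_B} = F / d` and `-1 ≤ F ≤ 1`.
-/

theorem IsStarProjection.posSemidef {n R : Type*} [Fintype n] [Ring R] [PartialOrder R]
    [StarRing R] [StarOrderedRing R] {P : Matrix n n R} (hP : IsStarProjection P) :
    P.PosSemidef := by
  have h := posSemidef_conjTranspose_mul_self P
  rwa [hP.isSelfAdjoint.isHermitian.eq, hP.isIdempotentElem.eq] at h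

theorem IsStarProjection.trace_mul_nonneg {n R : Type*} [Fintype n] [CommRing R]
    [PartialOrder R] [StarRing R] [StarOrderedRing R] {P Y : Matrix n n R}
    (hP : IsStarProjection P) (hY : Y.PosSemidef) : 0 ≤ (P * Y).trace := by
  have h := (hY.conjTranspose_mul_mul_same P).trace_nonneg
  rwa [hP.isSelfAdjoint.isHermitian.eq, trace_mul_cycle, hP.isIdempotentElem.eq] at h

theorem IsSelfAdjoint.isStarProjection_inv_two_smul_one_add {A : Type*} [Ring A] [StarRing A]
    [Algebra ℂ A] [StarModule ℂ A] {F : A} (hF : IsSelfAdjoint F) (hFF : F * F = 1) :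
    IsStarProjection ((2 : ℂ)⁻¹ • (1 + F)) := by
  have hsq : (1 + F) * (1 + F) = (2 : ℂ) • (1 + F) := by
    rw [add_mul, mul_add, mul_add, hFF, one_mul, mul_one, one_mul, two_smul]
    abel
  refine ⟨?_, ?_⟩
  · rw [IsIdempotentElem, smul_mul_smul_comm, hsq, smul_smul]
    norm_num
  · exact IsSelfAdjoint.smul (r := (2 : ℂ)⁻¹) (by simp [IsSelfAdjoint])
      ((IsSelfAdjoint.one A).add hF)

theorem Loe.smul {n : Type*} [Fintype n] {M N : Matrix n n ℂ} (h : Loe M N) {c : ℝ}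
    (hc : 0 ≤ c) : Loe (c • M) (c • N) := by
  unfold Loe at *
  rw [← smul_sub]
  exact h.smul hc

namespace Matrix.IsHermitian

variable {n : Type*} [Fintype n] [DecidableEq n] {F : Matrix n n ℂ}

theorem neg_one_loe_of_mul_self_eq_one (hF : F.IsHermitian) (hFF : F * F = 1) : Loe (-1) F := by
  have h := (hF.isSelfAdjoint.isStarProjection_inv_two_smul_one_add hFF).posSemidef.smul
    (a := (2 : ℝ)) zero_le_two
  unfold Loe
  convert h using 1
  rw [sub_neg_eq_add, add_comm, ← smul_assoc]
  norm_num

theorem loe_one_of_mul_self_eq_one (hF : F.IsHermitian) (hFF : F * F = 1) : Loe F 1 := by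
  have h := hF.neg.neg_one_loe_of_mul_self_eq_one (by rwa [neg_mul_neg])
  unfold Loe at *
  rwa [sub_neg_eq_add, neg_add_eq_sub] at h

theorem trace_mul_le_trace_of_loe (hF : F.IsHermitian) (hFF : F * F = 1) {X σ : Matrix n n ℂ}
    (hlo : Loe (-σ) X) (hhi : Loe X σ) : (F * X).trace ≤ σ.trace := by
  set P : Matrix n n ℂ := (2 : ℂ)⁻¹ • (1 + F)
  have hP : IsStarProjection P := hF.isSelfAdjoint.isStarProjection_inv_two_smul_one_add hFF
  have hsplit : σ - F * X = P * (σ - X) + (1 - P) * (X - -σ) := by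
    simp only [P, smul_mul_assoc, add_mul, one_mul, mul_sub, sub_mul, mul_neg]
    module
  have h := add_nonneg (hP.trace_mul_nonneg hhi) (hP.one_sub.trace_mul_nonneg hlo)
  rwa [← trace_add, ← hsplit, trace_sub, sub_nonneg] at h

end Matrix.IsHermitian

section PartialTranspose

variable {A B : Type*}

theorem PTb_smul (c : ℝ) (M : Matrix (A × B) (A × B) ℂ) : PTb (c • M) = c • PTb M :=
  rfl

theorem trace_PTb_mul_PTb [Fintype A] [Fintype B] (M N : Matrix (A × B) (A × B) ℂ) :
    (PTb M * PTb N).trace = (M * N).trace := by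
  simp only [trace, diag, mul_apply, PTb]
  rw [← Fintype.sum_prod_type', ← Fintype.sum_prod_type']
  let e : (A × B) × (A × B) ≃ (A × B) × (A × B) :=
    ⟨fun x => ((x.1.1, x.2.2), (x.2.1, x.1.2)), fun x => ((x.1.1, x.2.2), (x.2.1, x.1.2)),
      fun _ => rfl, fun _ => rfl⟩
  exact Fintype.sum_equiv e _ _ fun _ => rfl

end PartialTranspose

def swapOperator (n : Type*) [DecidableEq n] : Matrix (n × n) (n × n) ℂ :=
  Equiv.Perm.permMatrix ℂ (Equiv.prodComm n n)

theorem swapOperator_isHermitian (n : Type*) [DecidableEq n] :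
    (swapOperator n).IsHermitian := by
  simp [swapOperator, IsHermitian, Equiv.Perm.inv_def]

theorem swapOperator_mul_self (n : Type*) [Fintype n] [DecidableEq n] :
    swapOperator n * swapOperator n = 1 := by
  rw [swapOperator, ← permMatrix_mul]
  convert permMatrix_one
  ext <;> rfl

theorem Phi_isHermitian (d : ℕ) : (Phi d).IsHermitian := by
  ext p q
  simp [Phi, and_comm]

theorem PTb_Phi (d : ℕ) : PTb (Phi d) = swapOperator (Fin d) := by
  ext p q
  simp [PTb, Phi, swapOperator, Equiv.Perm.permMatrix, Prod.ext_iff, eq_comm,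
    and_comm]

/-- `Γ(I_d) = d` for the noiseless qudit channel `I_d`. -/
theorem gamma_identity_channel (d : ℕ) (hd : 0 < d) :
    IsGreatest (GammaSet (Phi d)) (d : ℝ) := by
  have hS := swapOperator_isHermitian (Fin d)
  have hSS := swapOperator_mul_self (Fin d)
  have hinv : 0 ≤ (d : ℝ)⁻¹ := by positivity
  have hkron (c : ℝ) :
      (c • 1 : Matrix (Fin d) (Fin d) ℂ) ⊗ₖ (1 : Matrix (Fin d) (Fin d) ℂ) = c • 1 := by
    rw [smul_kronecker, one_kronecker_one]
  refine ⟨⟨(d : ℝ)⁻¹ • Phi d, (d : ℝ)⁻¹ • 1, ?_, PosSemidef.one.smul hinv, ?_, ?_, ?_, ?_⟩, ?_⟩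
  · exact IsSelfAdjoint.smul (IsSelfAdjoint.all _) (Phi_isHermitian d).isSelfAdjoint
  · simp [trace_smul, hd.ne']
  · rw [hkron, ← smul_neg, PTb_smul, PTb_Phi]
    exact (hS.neg_one_loe_of_mul_self_eq_one hSS).smul hinv
  · rw [hkron, PTb_smul, PTb_Phi]
    exact (hS.loe_one_of_mul_self_eq_one hSS).smul hinv
  · rw [Matrix.mul_smul, trace_smul, ← trace_PTb_mul_PTb, PTb_Phi, hSS]
    simp [hd.ne']
  · rintro t ⟨R, ρ, -, -, hρ, hlo, hhi, ht⟩
    have h := hS.trace_mul_le_trace_of_loe hSS hlo hhi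
    rw [← PTb_Phi, trace_PTb_mul_PTb, ht, trace_kronecker, hρ, one_mul, trace_one,
      Fintype.card_fin] at h
    exact_mod_cast h
end

section
/- Super-multiplicativity of the optimal PPT fidelity: for channels N1, N2 and positive reals k1, k2, F^{PPTp}(N1, k1) · F^{PPTp}(N2, k2) ≤ F^{PPTp}(N1 ⊗ N2, k1 k2), where F^{PPTp}(N, k) = max tr(J_N W) subject to 0 ≤ W ≤ ρ ⊗ I, tr ρ = 1, ρ ≥ 0, and −(ρ ⊗ I)/k ≤ W^{T_B} ≤ (ρ ⊗ I)/k. -/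
/-!
Tensor products of feasible points are feasible: if `(W₁, ρ₁)` and `(W₂, ρ₂)` are feasible for
`(N₁, k₁)` and `(N₂, k₂)`, then `(W₁ ⊗ W₂, ρ₁ ⊗ ρ₂)` is feasible for `(N₁ ⊗ N₂, k₁ k₂)` with
objective value `tr(J₁ W₁) · tr(J₂ W₂)`. The Loewner bounds multiply because the differences
factor into sums of tensor products of positive semidefinite matrices:
`P₁ ⊗ P₂ - W₁ ⊗ W₂ = (P₁ - W₁) ⊗ P₂ + W₁ ⊗ (P₂ - W₂)` and
`2 (Q₁ ⊗ Q₂ - T₁ ⊗ T₂) = (Q₁ - T₁) ⊗ (Q₂ + T₂) + (Q₁ + T₁) ⊗ (Q₂ - T₂)`,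
while the partial transpose over `B₁ B₂` acts factorwise.
-/

open Matrix
open scoped Kronecker ComplexOrder

/-- Partial trace over the second tensor factor. -/
noncomputable def trB {A B : Type*} [Fintype B]
    (M : Matrix (A × B) (A × B) ℂ) : Matrix A A ℂ :=
  fun i j => ∑ b, M (i, b) (j, b)

/-- Values of the PPT-preserving fidelity SDP `F^{PPTp}(N, k)`:
`tr(J W)` with `0 ≤ W ≤ ρ ⊗ I`, `tr ρ = 1`, `ρ ≥ 0`,
`−(ρ ⊗ I)/k ≤ W^{T_B} ≤ (ρ ⊗ I)/k`. -/
def FSet {A B : Type*} [Fintype A] [Fintype B] [DecidableEq B]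
    (J : Matrix (A × B) (A × B) ℂ) (k : ℝ) : Set ℝ :=
  {t : ℝ | ∃ (W : Matrix (A × B) (A × B) ℂ) (ρ : Matrix A A ℂ),
    ρ.PosSemidef ∧ ρ.trace = 1 ∧ W.PosSemidef ∧
    Loe W (ρ ⊗ₖ (1 : Matrix B B ℂ)) ∧
    Loe (-(((k : ℂ))⁻¹ • (ρ ⊗ₖ (1 : Matrix B B ℂ)))) (PTb W) ∧
    Loe (PTb W) (((k : ℂ))⁻¹ • (ρ ⊗ₖ (1 : Matrix B B ℂ))) ∧
    (J * W).trace = (t : ℂ)}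

/-- The Choi matrix of a tensor product channel, with factors reordered. -/
def choiTensor {A1 B1 A2 B2 : Type*}
    (J1 : Matrix (A1 × B1) (A1 × B1) ℂ) (J2 : Matrix (A2 × B2) (A2 × B2) ℂ) :
    Matrix ((A1 × A2) × (B1 × B2)) ((A1 × A2) × (B1 × B2)) ℂ :=
  fun p q => J1 (p.1.1, p.2.1) (q.1.1, q.2.1) * J2 (p.1.2, p.2.2) (q.1.2, q.2.2)

theorem Matrix.trace_submatrix_equiv {m n R : Type*} [Fintype m] [Fintype n] [AddCommMonoid R]
    (M : Matrix m m R) (e : n ≃ m) : (M.submatrix e e).trace = M.trace :=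
  e.sum_comp fun i => M i i

namespace Loe

variable {m n : Type*} [Fintype m] [Fintype n]

theorem submatrix {M N : Matrix m m ℂ} (h : Loe M N) (e : n → m) :
    Loe (M.submatrix e e) (N.submatrix e e) :=
  PosSemidef.submatrix h e

theorem kronecker {W₁ P₁ : Matrix m m ℂ} {W₂ P₂ : Matrix n n ℂ}
    (hW₁ : W₁.PosSemidef) (h₁ : Loe W₁ P₁) (hW₂ : W₂.PosSemidef) (h₂ : Loe W₂ P₂) :
    Loe (W₁ ⊗ₖ W₂) (P₁ ⊗ₖ P₂) := by
  have hP₂ : P₂.PosSemidef := by simpa using h₂.add hW₂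
  have key : P₁ ⊗ₖ P₂ - W₁ ⊗ₖ W₂ = (P₁ - W₁) ⊗ₖ P₂ + W₁ ⊗ₖ (P₂ - W₂) := by
    ext p q
    simp only [Matrix.sub_apply, Matrix.add_apply, kroneckerMap_apply]
    ring
  unfold Loe
  rw [key]
  exact (PosSemidef.kronecker h₁ hP₂).add (hW₁.kronecker h₂)

theorem kronecker_of_neg_le {T₁ Q₁ : Matrix m m ℂ} {T₂ Q₂ : Matrix n n ℂ}
    (hl₁ : Loe (-Q₁) T₁) (hu₁ : Loe T₁ Q₁) (hl₂ : Loe (-Q₂) T₂) (hu₂ : Loe T₂ Q₂) :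
    Loe (T₁ ⊗ₖ T₂) (Q₁ ⊗ₖ Q₂) := by
  unfold Loe at *
  rw [sub_neg_eq_add, add_comm] at hl₁ hl₂
  have key : Q₁ ⊗ₖ Q₂ - T₁ ⊗ₖ T₂ =
      (2⁻¹ : ℝ) • ((Q₁ - T₁) ⊗ₖ (Q₂ + T₂) + (Q₁ + T₁) ⊗ₖ (Q₂ - T₂)) := by
    ext p q
    simp only [Matrix.sub_apply, Matrix.add_apply, Matrix.smul_apply, Complex.real_smul,
      kroneckerMap_apply]
    push_cast
    ring
  rw [key]
  exact ((PosSemidef.kronecker hu₁ hl₂).add (PosSemidef.kronecker hl₁ hu₂)).smul (by norm_num)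

theorem neg_kronecker_of_neg_le {T₁ Q₁ : Matrix m m ℂ} {T₂ Q₂ : Matrix n n ℂ}
    (hl₁ : Loe (-Q₁) T₁) (hu₁ : Loe T₁ Q₁) (hl₂ : Loe (-Q₂) T₂) (hu₂ : Loe T₂ Q₂) :
    Loe (-(Q₁ ⊗ₖ Q₂)) (T₁ ⊗ₖ T₂) := by
  have hl₁' : Loe (-Q₁) (-T₁) := by unfold Loe at *; convert hu₁ using 1; abel
  have hu₁' : Loe (-T₁) Q₁ := by unfold Loe at *; convert hl₁ using 1; abel
  have h := kronecker_of_neg_le hl₁' hu₁' hl₂ hu₂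
  unfold Loe at *
  convert h using 1
  ext p q
  simp only [Matrix.sub_apply, Matrix.neg_apply, kroneckerMap_apply]
  ring

end Loe

section choiTensor

variable {A₁ B₁ A₂ B₂ : Type*}

theorem choiTensor_eq_submatrix (M : Matrix (A₁ × B₁) (A₁ × B₁) ℂ)
    (N : Matrix (A₂ × B₂) (A₂ × B₂) ℂ) :
    choiTensor M N = (M ⊗ₖ N).submatrix (Equiv.prodProdProdComm A₁ A₂ B₁ B₂)
      (Equiv.prodProdProdComm A₁ A₂ B₁ B₂) :=
  rfl

theorem PTb_choiTensor (M : Matrix (A₁ × B₁) (A₁ × B₁) ℂ) (N : Matrix (A₂ × B₂) (A₂ × B₂) ℂ) :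
    PTb (choiTensor M N) = choiTensor (PTb M) (PTb N) :=
  rfl

theorem choiTensor_smul_smul (a b : ℂ) (M : Matrix (A₁ × B₁) (A₁ × B₁) ℂ)
    (N : Matrix (A₂ × B₂) (A₂ × B₂) ℂ) :
    choiTensor (a • M) (b • N) = (a * b) • choiTensor M N := by
  ext p q
  simp only [choiTensor, Matrix.smul_apply, smul_eq_mul]
  ring

theorem trace_choiTensor_mul_choiTensor [Fintype A₁] [Fintype B₁] [Fintype A₂] [Fintype B₂]
    (J₁ M : Matrix (A₁ × B₁) (A₁ × B₁) ℂ) (J₂ N : Matrix (A₂ × B₂) (A₂ × B₂) ℂ) :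
    (choiTensor J₁ J₂ * choiTensor M N).trace = (J₁ * M).trace * (J₂ * N).trace := by
  rw [choiTensor_eq_submatrix, choiTensor_eq_submatrix, submatrix_mul_equiv,
    trace_submatrix_equiv, ← mul_kronecker_mul, trace_kronecker]

theorem kronecker_one_eq_choiTensor [DecidableEq B₁] [DecidableEq B₂]
    (ρ₁ : Matrix A₁ A₁ ℂ) (ρ₂ : Matrix A₂ A₂ ℂ) :
    (ρ₁ ⊗ₖ ρ₂) ⊗ₖ (1 : Matrix (B₁ × B₂) (B₁ × B₂) ℂ) =
      choiTensor (ρ₁ ⊗ₖ (1 : Matrix B₁ B₁ ℂ)) (ρ₂ ⊗ₖ (1 : Matrix B₂ B₂ ℂ)) := by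
  rw [← one_kronecker_one]
  ext p q
  simp only [choiTensor, kroneckerMap_apply]
  ring

end choiTensor

theorem mul_mem_FSet_choiTensor {A₁ B₁ A₂ B₂ : Type*} [Fintype A₁] [Fintype B₁] [Fintype A₂]
    [Fintype B₂] [DecidableEq B₁] [DecidableEq B₂]
    {J₁ : Matrix (A₁ × B₁) (A₁ × B₁) ℂ} {J₂ : Matrix (A₂ × B₂) (A₂ × B₂) ℂ} {k₁ k₂ t₁ t₂ : ℝ}
    (h₁ : t₁ ∈ FSet J₁ k₁) (h₂ : t₂ ∈ FSet J₂ k₂) :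
    t₁ * t₂ ∈ FSet (choiTensor J₁ J₂) (k₁ * k₂) := by
  obtain ⟨W₁, ρ₁, hρ₁, htr₁, hW₁, hWρ₁, hl₁, hu₁, hval₁⟩ := h₁
  obtain ⟨W₂, ρ₂, hρ₂, htr₂, hW₂, hWρ₂, hl₂, hu₂, hval₂⟩ := h₂
  have hQ : ((k₁ * k₂ : ℝ) : ℂ)⁻¹ • ((ρ₁ ⊗ₖ ρ₂) ⊗ₖ (1 : Matrix (B₁ × B₂) (B₁ × B₂) ℂ)) =
      choiTensor ((k₁ : ℂ)⁻¹ • (ρ₁ ⊗ₖ (1 : Matrix B₁ B₁ ℂ)))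
        ((k₂ : ℂ)⁻¹ • (ρ₂ ⊗ₖ (1 : Matrix B₂ B₂ ℂ))) := by
    rw [kronecker_one_eq_choiTensor, choiTensor_smul_smul, Complex.ofReal_mul, mul_inv]
  refine ⟨choiTensor W₁ W₂, ρ₁ ⊗ₖ ρ₂, hρ₁.kronecker hρ₂, ?_, ?_, ?_, ?_, ?_, ?_⟩
  · rw [trace_kronecker, htr₁, htr₂, one_mul]
  · rw [choiTensor_eq_submatrix]
    exact (hW₁.kronecker hW₂).submatrix _
  · rw [kronecker_one_eq_choiTensor, choiTensor_eq_submatrix, choiTensor_eq_submatrix]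
    exact (Loe.kronecker hW₁ hWρ₁ hW₂ hWρ₂).submatrix _
  · rw [hQ, PTb_choiTensor, choiTensor_eq_submatrix, choiTensor_eq_submatrix]
    exact (Loe.neg_kronecker_of_neg_le hl₁ hu₁ hl₂ hu₂).submatrix _
  · rw [hQ, PTb_choiTensor, choiTensor_eq_submatrix, choiTensor_eq_submatrix]
    exact (Loe.kronecker_of_neg_le hl₁ hu₁ hl₂ hu₂).submatrix _
  · rw [trace_choiTensor_mul_choiTensor, hval₁, hval₂, Complex.ofReal_mul]

theorem ppt_fidelity_supermultiplicative_general
    {A1 B1 A2 B2 : Type*} [Fintype A1] [Fintype B1] [Fintype A2] [Fintype B2]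
    [DecidableEq B1] [DecidableEq B2]
    (J1 : Matrix (A1 × B1) (A1 × B1) ℂ) (J2 : Matrix (A2 × B2) (A2 × B2) ℂ)
    (k1 k2 : ℝ)
    (f1 f2 f12 : ℝ)
    (hf1 : IsGreatest (FSet J1 k1) f1) (hf2 : IsGreatest (FSet J2 k2) f2)
    (hf12 : IsGreatest (FSet (choiTensor J1 J2) (k1 * k2)) f12) :
    f1 * f2 ≤ f12 :=
  hf12.2 (mul_mem_FSet_choiTensor hf1.1 hf2.1)

/-- Super-multiplicativity of the optimal PPT fidelity:
`F^{PPTp}(N1, k1) · F^{PPTp}(N2, k2) ≤ F^{PPTp}(N1 ⊗ N2, k1 k2)`. -/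
theorem ppt_fidelity_supermultiplicative
    {A1 B1 A2 B2 : Type*} [Fintype A1] [Fintype B1] [Fintype A2] [Fintype B2]
    [DecidableEq A1] [DecidableEq B1] [DecidableEq A2] [DecidableEq B2]
    (J1 : Matrix (A1 × B1) (A1 × B1) ℂ) (J2 : Matrix (A2 × B2) (A2 × B2) ℂ)
    (hJ1 : J1.PosSemidef) (hJ1TP : trB J1 = 1)
    (hJ2 : J2.PosSemidef) (hJ2TP : trB J2 = 1)
    (k1 k2 : ℝ) (hk1 : 0 < k1) (hk2 : 0 < k2)
    (f1 f2 f12 : ℝ)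
    (hf1 : IsGreatest (FSet J1 k1) f1) (hf2 : IsGreatest (FSet J2 k2) f2)
    (hf12 : IsGreatest (FSet (choiTensor J1 J2) (k1 * k2)) f12) :
    f1 * f2 ≤ f12 :=
  ppt_fidelity_supermultiplicative_general J1 J2 k1 k2 f1 f2 f12 hf1 hf2 hf12
end

section
/- For every quantum channel N, Γ(N) ≤ ‖J_N^{T_B}‖_cb-witnessed bound: specifically, if R, ρ are feasible for Γ(N) (R Hermitian, ρ a density operator, −ρ⊗I ≤ R^{T_B} ≤ ρ⊗I), then X = R^{T_B} is feasible for the SDP max ½tr(J_N^{T_B}X) + ½tr(J_N^{T_B}X†) subject to the block operator [[ρ0 ⊗ I, X],[X†, ρ1 ⊗ I]] ≥ 0 with ρ0, ρ1 density operators, and achieves value tr(J_N R). Hence Q_Γ(N) ≤ Q_Θ(N) = log ‖J_N^{T_B}‖_cb. -/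
open Matrix
open scoped Kronecker ComplexOrder

/-- The values of Watrous's SDP characterization of `‖J^{T_B}‖_cb`:
`½ tr(J^{T_B} X) + ½ tr(J^{T_B} X†)` subject to
`[[ρ0 ⊗ I, X], [X†, ρ1 ⊗ I]] ≥ 0` with `ρ0, ρ1` density operators. -/
def CBSet {A B : Type*} [Fintype A] [Fintype B] [DecidableEq B]
    (J : Matrix (A × B) (A × B) ℂ) : Set ℝ :=
  {t : ℝ | ∃ (ρ0 ρ1 : Matrix A A ℂ) (X : Matrix (A × B) (A × B) ℂ),
    ρ0.PosSemidef ∧ ρ0.trace = 1 ∧ ρ1.PosSemidef ∧ ρ1.trace = 1 ∧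
    (Matrix.fromBlocks (ρ0 ⊗ₖ (1 : Matrix B B ℂ)) X
      Xᴴ (ρ1 ⊗ₖ (1 : Matrix B B ℂ))).PosSemidef ∧
    (2⁻¹ * ((PTb J * X).trace + (PTb J * Xᴴ).trace)).re = t}

theorem Matrix.PosSemidef.fromBlocks_of_add_of_sub {𝕜 n : Type*} [RCLike 𝕜] [Fintype n]
    {P X : Matrix n n 𝕜} (hX : X.IsHermitian) (hadd : (P + X).PosSemidef)
    (hsub : (P - X).PosSemidef) :
    (fromBlocks P X Xᴴ P).PosSemidef := by
  classical
  let Cadd : Matrix n (n ⊕ n) 𝕜 := fromCols 1 1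
  let Csub : Matrix n (n ⊕ n) 𝕜 := fromCols 1 (-1)
  have hdecomp : fromBlocks P X Xᴴ P =
      (2⁻¹ : 𝕜) • (Caddᴴ * (P + X) * Cadd + Csubᴴ * (P - X) * Csub) := by
    simp only [Cadd, Csub, conjTranspose_fromCols_eq_fromRows_conjTranspose, fromRows_mul,
      mul_fromCols, fromCols_fromRows_eq_fromBlocks, fromBlocks_add, fromBlocks_smul, hX.eq,
      conjTranspose_one, conjTranspose_neg, Matrix.one_mul, Matrix.mul_one, Matrix.neg_mul,
      Matrix.mul_neg, fromRows_neg, neg_neg]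
    congr 1 <;> module
  rw [hdecomp]
  exact ((hadd.conjTranspose_mul_mul_same _).add (hsub.conjTranspose_mul_mul_same _)).smul
    (by positivity)

section PartialTranspose

variable {A B : Type*}

theorem conjTranspose_PTb (M : Matrix (A × B) (A × B) ℂ) : (PTb M)ᴴ = PTb Mᴴ := rfl

theorem Matrix.IsHermitian.PTb {M : Matrix (A × B) (A × B) ℂ} (hM : M.IsHermitian) :
    (PTb M).IsHermitian := by
  rw [IsHermitian, conjTranspose_PTb, hM.eq]

end PartialTranspose

theorem gamma_le_cb_bound_general
    {A B : Type*} [Fintype A] [Fintype B] [DecidableEq B]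
    (J : Matrix (A × B) (A × B) ℂ)
    (R : Matrix (A × B) (A × B) ℂ) (ρ : Matrix A A ℂ)
    (hR : R.IsHermitian) (hρ : ρ.PosSemidef) (hρ1 : ρ.trace = 1)
    (hlow : Loe (-(ρ ⊗ₖ (1 : Matrix B B ℂ))) (PTb R))
    (hupp : Loe (PTb R) (ρ ⊗ₖ (1 : Matrix B B ℂ)))
    (cbval : ℝ) (hcb : IsGreatest (CBSet J) cbval) :
    (Matrix.fromBlocks (ρ ⊗ₖ (1 : Matrix B B ℂ)) (PTb R)
      (PTb R)ᴴ (ρ ⊗ₖ (1 : Matrix B B ℂ))).PosSemidef ∧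
    (2⁻¹ * ((PTb J * PTb R).trace + (PTb J * (PTb R)ᴴ).trace)) = (J * R).trace ∧
    (J * R).trace.re ≤ cbval := by
  have hX : (PTb R).IsHermitian := hR.PTb
  have hadd : (ρ ⊗ₖ (1 : Matrix B B ℂ) + PTb R).PosSemidef := by
    simpa only [Loe, sub_neg_eq_add, add_comm] using hlow
  have hblock := PosSemidef.fromBlocks_of_add_of_sub hX hadd hupp
  have hvalue : 2⁻¹ * ((PTb J * PTb R).trace + (PTb J * (PTb R)ᴴ).trace) = (J * R).trace := by
    rw [hX.eq, trace_PTb_mul_PTb]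
    ring
  exact ⟨hblock, hvalue, hcb.2 ⟨ρ, ρ, PTb R, hρ, hρ1, hρ, hρ1, hblock, by rw [hvalue]⟩⟩

/-- If `(R, ρ)` is feasible for `Γ(N)`, then `X = R^{T_B}` (with `ρ0 = ρ1 = ρ`)
is feasible for the SDP for `‖J_N^{T_B}‖_cb` and achieves value `tr(J_N R)`;
hence `Γ(N) ≤ ‖J_N^{T_B}‖_cb`, i.e. `Q_Γ(N) ≤ Q_Θ(N)`. -/
theorem gamma_le_cb_bound
    {A B : Type*} [Fintype A] [Fintype B] [DecidableEq A] [DecidableEq B]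
    (J : Matrix (A × B) (A × B) ℂ) (hJ : J.PosSemidef) (hTP : trB J = 1)
    (R : Matrix (A × B) (A × B) ℂ) (ρ : Matrix A A ℂ)
    (hR : R.IsHermitian) (hρ : ρ.PosSemidef) (hρ1 : ρ.trace = 1)
    (hlow : Loe (-(ρ ⊗ₖ (1 : Matrix B B ℂ))) (PTb R))
    (hupp : Loe (PTb R) (ρ ⊗ₖ (1 : Matrix B B ℂ)))
    (cbval : ℝ) (hcb : IsGreatest (CBSet J) cbval) :
    (Matrix.fromBlocks (ρ ⊗ₖ (1 : Matrix B B ℂ)) (PTb R)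
      (PTb R)ᴴ (ρ ⊗ₖ (1 : Matrix B B ℂ))).PosSemidef ∧
    (2⁻¹ * ((PTb J * PTb R).trace + (PTb J * (PTb R)ᴴ).trace)) = (J * R).trace ∧
    (J * R).trace.re ≤ cbval :=
  gamma_le_cb_bound_general J R ρ hR hρ hρ1 hlow hupp cbval hcb
end

section
/- If A1 ≥ 0, A2 ≥ 0, B1, B2 Hermitian with −A1 ≤ B1 ≤ A1 and −A2 ≤ B2 ≤ A2, then the operators Y, V defined by Y + V = A1 ⊗ A2 and V − Y = B1 ⊗ B2 satisfy Y ≥ 0 and V ≥ 0. -/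
open Matrix
open scoped Kronecker ComplexOrder

/-
The identity `2 (A₁ ⊗ A₂ - B₁ ⊗ B₂) = (A₁ - B₁) ⊗ (A₂ + B₂) + (A₁ + B₁) ⊗ (A₂ - B₂)` writes
`A₁ ⊗ A₂ - B₁ ⊗ B₂` as a sum of Kronecker products of positive semidefinite matrices, hence it is
positive semidefinite; replacing `B₂` by `-B₂` gives the same for `A₁ ⊗ A₂ + B₁ ⊗ B₂`. Finally
`Y` and `V` are half of these two matrices.
-/

namespace Matrix

variable {n m : Type*}

theorem sub_kronecker_add_add_add_kronecker_sub {R : Type*} [CommRing R]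
    (A₁ B₁ : Matrix n n R) (A₂ B₂ : Matrix m m R) :
    (A₁ - B₁) ⊗ₖ (A₂ + B₂) + (A₁ + B₁) ⊗ₖ (A₂ - B₂) = (2 : R) • (A₁ ⊗ₖ A₂ - B₁ ⊗ₖ B₂) := by
  ext ⟨i, j⟩ ⟨k, l⟩
  simp only [kroneckerMap_apply, add_apply, sub_apply, smul_apply, smul_eq_mul]
  ring

theorem kronecker_neg {R : Type*} [Ring R] (A : Matrix n n R) (B : Matrix m m R) :
    A ⊗ₖ (-B) = -(A ⊗ₖ B) := by
  ext
  simp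

variable [Fintype n] [Fintype m] {𝕜 : Type*} [RCLike 𝕜] {A₁ B₁ : Matrix n n 𝕜}
  {A₂ B₂ : Matrix m m 𝕜}

theorem posSemidef_kronecker_sub_kronecker (h₁ : (A₁ - B₁).PosSemidef)
    (h₁' : (A₁ + B₁).PosSemidef) (h₂ : (A₂ - B₂).PosSemidef) (h₂' : (A₂ + B₂).PosSemidef) :
    (A₁ ⊗ₖ A₂ - B₁ ⊗ₖ B₂).PosSemidef := by
  have h := ((h₁.kronecker h₂').add (h₁'.kronecker h₂)).smul (a := (2⁻¹ : 𝕜)) (by positivity)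
  rwa [sub_kronecker_add_add_add_kronecker_sub, inv_smul_smul₀ two_ne_zero] at h

theorem posSemidef_kronecker_add_kronecker (h₁ : (A₁ - B₁).PosSemidef)
    (h₁' : (A₁ + B₁).PosSemidef) (h₂ : (A₂ - B₂).PosSemidef) (h₂' : (A₂ + B₂).PosSemidef) :
    (A₁ ⊗ₖ A₂ + B₁ ⊗ₖ B₂).PosSemidef := by
  have h := posSemidef_kronecker_sub_kronecker (B₂ := -B₂) h₁ h₁' (by rwa [sub_neg_eq_add])
    (by rwa [← sub_eq_add_neg])
  rwa [kronecker_neg, sub_neg_eq_add] at h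

end Matrix

theorem tensor_dual_positivity_general
    {n m : Type*} [Fintype n] [Fintype m]
    (A1 B1 : Matrix n n ℂ) (A2 B2 : Matrix m m ℂ)
    (h1low : Loe (-A1) B1) (h1upp : Loe B1 A1)
    (h2low : Loe (-A2) B2) (h2upp : Loe B2 A2)
    (Y V : Matrix (n × m) (n × m) ℂ)
    (hYV : Y + V = A1 ⊗ₖ A2) (hVY : V - Y = B1 ⊗ₖ B2) :
    Y.PosSemidef ∧ V.PosSemidef := by
  have hY : Y = (2⁻¹ : ℝ) • (A1 ⊗ₖ A2 - B1 ⊗ₖ B2) := by rw [← hYV, ← hVY]; module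
  have hV : V = (2⁻¹ : ℝ) • (A1 ⊗ₖ A2 + B1 ⊗ₖ B2) := by rw [← hYV, ← hVY]; module
  rw [Loe, sub_neg_eq_add, add_comm] at h1low h2low
  rw [hY, hV]
  exact ⟨(posSemidef_kronecker_sub_kronecker h1upp h1low h2upp h2low).smul (by norm_num),
    (posSemidef_kronecker_add_kronecker h1upp h1low h2upp h2low).smul (by norm_num)⟩

/-- Positivity lemma for combining dual SDP solutions under tensor products:
if `A1, A2 ≥ 0`, `B1, B2` are Hermitian with `−A1 ≤ B1 ≤ A1` and
`−A2 ≤ B2 ≤ A2`, then `Y, V` defined by `Y + V = A1 ⊗ A2`, `V − Y = B1 ⊗ B2`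
satisfy `Y ≥ 0` and `V ≥ 0`. -/
theorem tensor_dual_positivity
    {n m : Type*} [Fintype n] [Fintype m] [DecidableEq n] [DecidableEq m]
    (A1 B1 : Matrix n n ℂ) (A2 B2 : Matrix m m ℂ)
    (hA1 : A1.PosSemidef) (hA2 : A2.PosSemidef)
    (hB1 : B1.IsHermitian) (hB2 : B2.IsHermitian)
    (h1low : Loe (-A1) B1) (h1upp : Loe B1 A1)
    (h2low : Loe (-A2) B2) (h2upp : Loe B2 A2)
    (Y V : Matrix (n × m) (n × m) ℂ)
    (hYV : Y + V = A1 ⊗ₖ A2) (hVY : V - Y = B1 ⊗ₖ B2) :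
    Y.PosSemidef ∧ V.PosSemidef :=
  tensor_dual_positivity_general A1 B1 A2 B2 h1low h1upp h2low h2upp Y V hYV hVY
end
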